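/- For characters θ₁, θ₂ : 𝔢¹ → ℂ^×, one has (1/|H|)·Σ_{g ∈ H} χ_{θ₁}(g)·conj(χ_{θ₂}(g)) = 1 if θ₁ = θ₂, and = 0 if θ₁ ≠ θ₂. -/

import Mathlib

open Matrix

noncomputable section

open Classical in
/-- The function `χ_θ` on the lower-triangular subgroup `H` of `U(1,1)(𝔽_q)` (the
restriction to `H` of the character of the cuspidal representation with central character
`θ`): on `[[a,0],[c,ā⁻¹]]` it equals `(q−1)·θ(a)` if `a ∈ 𝔢¹` and `c = 0`, `−θ(a)` if
`a ∈ 𝔢¹` and `c ≠ 0`, and `0` if `a ∉ 𝔢¹`.  Here `x̄ = x^q` and `𝔢¹ = {x : x·x^q = 1}`. -/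
noncomputable def chiRes (q : ℕ) {e : Type*} [Field e] (θ : e → ℂ)
    (g : Matrix (Fin 2) (Fin 2) e) : ℂ :=
  if g 0 0 * (g 0 0) ^ q = 1 then
    (if g 1 0 = 0 then ((q : ℂ) - 1) * θ (g 0 0) else - θ (g 0 0))
  else 0

/-! Writing `g = [[a, 0], [t a, ā⁻¹]]`, the map `g ↦ (a, t)` identifies `H` with
`𝔢^× × {t : t + t̄ = 0}`. The trace-zero set has `q` elements: it is the kernel of the additive map
`t ↦ t + t̄`, whose image lies in `{x : x̄ = x}`; both sets have at most `q` elements by root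
counting, and their sizes multiply to `q²`. As `χ_{θ₁}(g) · conj χ_{θ₂}(g)` only depends on `a`
and on whether `t = 0`, summing over `t` gives the factor `(q - 1)² + (q - 1) = q (q - 1)`, and
since `|H| = (q² - 1) q` the normalized sum is `(q + 1)⁻¹ Σ_{a ∈ 𝔢¹} θ₁(a) conj θ₂(a)`. This is
the orthogonality of characters of the group `𝔢¹`, which has `q + 1` elements. -/

open Finset Polynomial ComplexConjugate

section FiniteField

variable {e : Type*} [Field e] [Fintype e] {q : ℕ}

lemma one_lt_of_card_eq_sq (hcard : Fintype.card e = q ^ 2) : 1 < q := by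
  have := Fintype.one_lt_card (α := e)
  by_contra! h
  interval_cases q <;> simp_all

lemma pow_pow_eq_self_of_card_eq_sq (hcard : Fintype.card e = q ^ 2) (x : e) :
    (x ^ q) ^ q = x := by
  rw [← pow_mul, ← sq, ← hcard, FiniteField.pow_card]

/-- `q` is a power of the characteristic, because `q ∣ q² = |𝔢|`. -/
lemma add_pow_eq_of_card_eq_sq (hcard : Fintype.card e = q ^ 2) (x y : e) :
    (x + y) ^ q = x ^ q + y ^ q := by
  obtain ⟨m, hprime, hm⟩ := FiniteField.card e (ringChar e)
  have : Fact (ringChar e).Prime := ⟨hprime⟩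
  obtain ⟨k, -, rfl⟩ := (Nat.dvd_prime_pow hprime).mp (hm ▸ hcard ▸ dvd_pow_self q two_ne_zero)
  exact add_pow_char_pow x y _ _

variable [DecidableEq e]

lemma card_filter_pow_eq_one {d : ℕ} (hd : 0 < d) (hdvd : d ∣ Fintype.card e - 1) :
    #{x : e | x ^ d = 1} = d := by
  obtain ⟨g, hg⟩ := IsCyclic.exists_ofOrder_eq_natCard (α := eˣ)
  have hg_order : orderOf g = Fintype.card e - 1 := by
    rw [hg, Nat.card_eq_fintype_card, Fintype.card_units]
  have hg_order_pos : orderOf g ≠ 0 := by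
    have := Fintype.one_lt_card (α := e)
    omega
  have hζ : IsPrimitiveRoot ((g ^ (orderOf g / d) : eˣ) : e) d := by
    have := IsPrimitiveRoot.orderOf (g ^ (orderOf g / d))
    rw [orderOf_pow_orderOf_div hg_order_pos (hg_order ▸ hdvd)] at this
    exact IsPrimitiveRoot.coe_units_iff.mpr this
  calc #{x : e | x ^ d = 1} = #(nthRootsFinset d (1 : e)) := by
        congr 1
        ext x
        simp [mem_nthRootsFinset hd]
    _ = d := hζ.card_nthRootsFinset

lemma card_filter_pow_eq_mul_le (hq : 1 < q) (c : e) : #{x : e | x ^ q = c * x} ≤ q := by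
  have hdeg : (X ^ q - C c * X : e[X]).natDegree = q := by
    rw [natDegree_sub_eq_left_of_natDegree_lt] <;> simp only [natDegree_X_pow]
    exact (natDegree_C_mul_le c X).trans_lt (by simpa using hq)
  have hne : (X ^ q - C c * X : e[X]) ≠ 0 := ne_zero_of_natDegree_gt (hdeg ▸ hq)
  refine hdeg ▸ card_le_degree_of_subset_roots fun x hx => ?_
  simp_all [mem_roots hne, sub_eq_zero]

lemma card_norm_eq_one (hcard : Fintype.card e = q ^ 2) : #{a : e | a * a ^ q = 1} = q + 1 := by
  simp_rw [← pow_succ']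
  refine card_filter_pow_eq_one q.succ_pos ?_
  rw [hcard, ← one_pow 2, Nat.sq_sub_sq]
  exact Dvd.intro _ rfl

lemma card_trace_eq_zero (hcard : Fintype.card e = q ^ 2) : #{t : e | t + t ^ q = 0} = q := by
  have hq := one_lt_of_card_eq_sq hcard
  let T : e →+ e :=
    { toFun t := t + t ^ q
      map_zero' := by simp [zero_pow (by omega : q ≠ 0)]
      map_add' x y := by simp only [add_pow_eq_of_card_eq_sq hcard]; ring }
  have hker : Nat.card T.ker = #{t : e | t + t ^ q = 0} := by
    rw [← Set.ncard_coe_finset, ← Nat.card_coe_set_eq]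
    congr!
    ext t
    simp [T]
  have hker_le : Nat.card T.ker ≤ q := by
    rw [hker]
    convert card_filter_pow_eq_mul_le hq (-1 : e) using 3 with t
    rw [neg_one_mul, eq_neg_iff_add_eq_zero, add_comm]
  have hrange : Nat.card T.range ≤ q := by
    have hsub : (T.range : Set e) ⊆ ↑({x : e | x ^ q = 1 * x} : Finset e) := by
      rintro _ ⟨t, rfl⟩
      simp [T, add_pow_eq_of_card_eq_sq hcard, pow_pow_eq_self_of_card_eq_sq hcard, add_comm]
    calc Nat.card T.range = (T.range : Set e).ncard := Nat.card_coe_set_eq _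
      _ ≤ #{x : e | x ^ q = 1 * x} := by
        rw [← Set.ncard_coe_finset]
        exact Set.ncard_le_ncard hsub
      _ ≤ q := card_filter_pow_eq_mul_le hq 1
  have hprod : Nat.card T.ker * Nat.card T.range = q ^ 2 := by
    rw [← AddSubgroup.index_ker, AddSubgroup.card_mul_index, Nat.card_eq_fintype_card, hcard]
  rw [← hker]
  nlinarith

end FiniteField

section Characters

variable {e : Type*} [Field e] {q : ℕ}

structure IsNormOneCharacter (q : ℕ) (θ : e → ℂ) : Prop where
  map_one : θ 1 = 1
  map_mul : ∀ x y : e, x * x ^ q = 1 → y * y ^ q = 1 → θ (x * y) = θ x * θ y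

lemma mul_mul_pow_eq_one {a b : e} (ha : a * a ^ q = 1) (hb : b * b ^ q = 1) :
    a * b * (a * b) ^ q = 1 := by
  rw [mul_pow, mul_mul_mul_comm, ha, hb, one_mul]

lemma pow_mul_pow_pow_eq_one {a : e} (ha : a * a ^ q = 1) (k : ℕ) : a ^ k * (a ^ k) ^ q = 1 := by
  rw [← pow_mul, mul_comm k q, pow_mul, ← mul_pow, ha, one_pow]

namespace IsNormOneCharacter

variable {θ θ₁ θ₂ : e → ℂ}

lemma map_pow (hθ : IsNormOneCharacter q θ) {a : e} (ha : a * a ^ q = 1) (k : ℕ) :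
    θ (a ^ k) = θ a ^ k := by
  induction k with
  | zero => simpa using hθ.map_one
  | succ k ih => rw [pow_succ, hθ.map_mul _ _ (pow_mul_pow_pow_eq_one ha k) ha, ih, pow_succ]

lemma mul_conj_self (hθ : IsNormOneCharacter q θ) {a : e} (ha : a * a ^ q = 1) :
    θ a * conj (θ a) = 1 := by
  have hpow : θ a ^ (q + 1) = 1 := by
    rw [← hθ.map_pow ha, pow_succ', ha, hθ.map_one]
  rw [Complex.mul_conj, Complex.normSq_eq_norm_sq,
    Complex.norm_eq_one_of_pow_eq_one hpow q.succ_ne_zero]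
  norm_num

variable [Fintype e] [DecidableEq e]

lemma sum_mul_conj_of_eqOn (hθ₂ : IsNormOneCharacter q θ₂)
    (heq : ∀ x : e, x * x ^ q = 1 → θ₁ x = θ₂ x) :
    ∑ a ∈ {a : e | a * a ^ q = 1}, θ₁ a * conj (θ₂ a) = #{a : e | a * a ^ q = 1} := by
  rw [card_eq_sum_ones, Nat.cast_sum, Nat.cast_one]
  refine sum_congr rfl fun a ha => ?_
  rw [mem_filter] at ha
  rw [heq a ha.2, hθ₂.mul_conj_self ha.2]

/-- Multiplying by `b` permutes `𝔢¹` and scales the sum by `θ₁ b · conj (θ₂ b) ≠ 1`. -/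
lemma sum_mul_conj_eq_zero (hθ₁ : IsNormOneCharacter q θ₁) (hθ₂ : IsNormOneCharacter q θ₂)
    {b : e} (hb : b * b ^ q = 1) (hne : θ₁ b ≠ θ₂ b) :
    ∑ a ∈ {a : e | a * a ^ q = 1}, θ₁ a * conj (θ₂ a) = 0 := by
  have hb_ne : θ₁ b * conj (θ₂ b) ≠ 1 := by
    intro h
    have h₂ := hθ₂.mul_conj_self hb
    exact hne (mul_right_cancel₀ (right_ne_zero_of_mul_eq_one h₂) (h.trans h₂.symm))
  have hperm : ∑ a ∈ {a : e | a * a ^ q = 1}, θ₁ (b * a) * conj (θ₂ (b * a)) =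
      ∑ a ∈ {a : e | a * a ^ q = 1}, θ₁ a * conj (θ₂ a) := by
    refine sum_nbij' (b * ·) (b ^ q * ·) ?_ ?_ ?_ ?_ (fun _ _ => rfl) <;>
      simp only [mem_filter, mem_univ, true_and]
    · exact fun a ha => mul_mul_pow_eq_one hb ha
    · exact fun a ha => mul_mul_pow_eq_one (pow_mul_pow_pow_eq_one hb q) ha
    · exact fun a _ => by linear_combination a * hb
    · exact fun a _ => by linear_combination a * hb
  have hshift : θ₁ b * conj (θ₂ b) * ∑ a ∈ {a : e | a * a ^ q = 1}, θ₁ a * conj (θ₂ a) =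
      ∑ a ∈ {a : e | a * a ^ q = 1}, θ₁ a * conj (θ₂ a) := by
    conv_rhs => rw [← hperm]
    rw [mul_sum]
    refine sum_congr rfl fun a ha => ?_
    rw [mem_filter] at ha
    rw [hθ₁.map_mul _ _ hb ha.2, hθ₂.map_mul _ _ hb ha.2, _root_.map_mul]
    ring
  have : (θ₁ b * conj (θ₂ b) - 1) * ∑ a ∈ {a : e | a * a ^ q = 1}, θ₁ a * conj (θ₂ a) = 0 := by
    rw [sub_mul, one_mul, hshift, sub_self]
  exact (mul_eq_zero.mp this).resolve_left (sub_ne_zero.mpr hb_ne)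

end IsNormOneCharacter

end Characters

section LowerUnitary

variable {e : Type*} [Field e] {q : ℕ}

def lowerUnitary (q : ℕ) (e : Type*) [Field e] : Set (Matrix (Fin 2) (Fin 2) e) :=
  {g | (Matrix.of fun i j => (g i j) ^ q)ᵀ * !![0, 1; 1, 0] * g = !![0, 1; 1, 0] ∧ g 0 1 = 0}

def lowerUnitaryOf (q : ℕ) (a t : e) : Matrix (Fin 2) (Fin 2) e := !![a, 0; t * a, (a ^ q)⁻¹]

lemma unitaryGram_of_lowerTriangular (hq : q ≠ 0) {g : Matrix (Fin 2) (Fin 2) e}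
    (h01 : g 0 1 = 0) :
    (Matrix.of fun i j => (g i j) ^ q)ᵀ * !![0, 1; 1, 0] * g =
      !![g 1 0 ^ q * g 0 0 + g 0 0 ^ q * g 1 0, g 0 0 ^ q * g 1 1; g 1 1 ^ q * g 0 0, 0] := by
  ext i j
  fin_cases i <;> fin_cases j <;> simp [Matrix.mul_apply, Fin.sum_univ_two, h01, zero_pow hq]

lemma mem_lowerUnitary_iff (hq : q ≠ 0) (g : Matrix (Fin 2) (Fin 2) e) :
    g ∈ lowerUnitary q e ↔ g 0 1 = 0 ∧ g 1 0 ^ q * g 0 0 + g 0 0 ^ q * g 1 0 = 0 ∧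
      g 0 0 ^ q * g 1 1 = 1 ∧ g 1 1 ^ q * g 0 0 = 1 := by
  rw [lowerUnitary, Set.mem_ofPred_eq, and_comm]
  refine and_congr_right fun h01 => ?_
  rw [unitaryGram_of_lowerTriangular hq h01]
  simp [and_assoc]

lemma injOn_lowerUnitaryOf :
    Set.InjOn (fun p : e × e => lowerUnitaryOf q p.1 p.2) {p | p.1 ≠ 0} := by
  rintro ⟨a, t⟩ (ha : a ≠ 0) ⟨a', t'⟩ - h
  have h00 := congrFun (congrFun h 0) 0
  have h10 := congrFun (congrFun h 1) 0
  simp only [lowerUnitaryOf, of_apply, cons_val', cons_val_zero, cons_val_one, empty_val',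
    cons_val_fin_one] at h00 h10
  subst h00
  simp_all

lemma chiRes_mul_conj_chiRes [DecidableEq e] (θ₁ θ₂ : e → ℂ) (g : Matrix (Fin 2) (Fin 2) e) :
    chiRes q θ₁ g * conj (chiRes q θ₂ g) =
      if g 0 0 * g 0 0 ^ q = 1 then
        (if g 1 0 = 0 then ((q : ℂ) - 1) ^ 2 else 1) * (θ₁ (g 0 0) * conj (θ₂ (g 0 0)))
      else 0 := by
  unfold chiRes
  split_ifs <;> simp
  ring

variable [Fintype e] [DecidableEq e]

lemma lowerUnitary_eq_image (hcard : Fintype.card e = q ^ 2) :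
    lowerUnitary q e = (fun p : e × e => lowerUnitaryOf q p.1 p.2) ''
      ↑(({a | a ≠ 0} : Finset e) ×ˢ ({t | t + t ^ q = 0} : Finset e)) := by
  have hq : q ≠ 0 := (one_lt_of_card_eq_sq hcard).ne_bot
  ext g
  simp only [Set.mem_image, mem_coe, mem_product, mem_filter, mem_univ, true_and, Prod.exists,
    mem_lowerUnitary_iff hq]
  constructor
  · rintro ⟨h01, h10, h11, -⟩
    have ha : g 0 0 ≠ 0 := by
      rintro h
      simp [h, zero_pow hq] at h11
    refine ⟨g 0 0, g 1 0 / g 0 0, ⟨ha, ?_⟩, ?_⟩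
    · rw [div_pow, div_add_div _ _ ha (pow_ne_zero q ha), div_eq_zero_iff]
      exact Or.inl (by linear_combination h10)
    · ext i j
      fin_cases i <;> fin_cases j <;>
        simp [lowerUnitaryOf, h01, ha, eq_inv_of_mul_eq_one_right h11]
  · rintro ⟨a, t, ⟨ha, ht⟩, rfl⟩
    simp only [lowerUnitaryOf, of_apply, cons_val', cons_val_zero, cons_val_one, empty_val',
      cons_val_fin_one, true_and]
    refine ⟨by rw [mul_pow]; linear_combination (a * a ^ q) * ht,
      mul_inv_cancel₀ (pow_ne_zero q ha),
      by rw [inv_pow, pow_pow_eq_self_of_card_eq_sq hcard, inv_mul_cancel₀ ha]⟩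

lemma card_lowerUnitary (hcard : Fintype.card e = q ^ 2) :
    Nat.card (lowerUnitary q e) = (q ^ 2 - 1) * q := by
  rw [lowerUnitary_eq_image hcard, Nat.card_coe_set_eq,
    Set.InjOn.ncard_image (injOn_lowerUnitaryOf.mono fun p hp => by simp_all), Set.ncard_coe_finset,
    card_product, card_trace_eq_zero hcard, filter_ne', card_erase_of_mem (mem_univ 0), card_univ,
    hcard]

lemma sum_trace_eq_zero_ite (hcard : Fintype.card e = q ^ 2) :
    ∑ t ∈ ({t | t + t ^ q = 0} : Finset e), (if t = 0 then ((q : ℂ) - 1) ^ 2 else 1) =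
      (q : ℂ) * (q - 1) := by
  have hq : q ≠ 0 := (one_lt_of_card_eq_sq hcard).ne_bot
  calc ∑ t ∈ ({t | t + t ^ q = 0} : Finset e), (if t = 0 then ((q : ℂ) - 1) ^ 2 else 1)
      = ∑ t ∈ ({t | t + t ^ q = 0} : Finset e), (1 + if t = 0 then ((q : ℂ) - 1) ^ 2 - 1 else 0) :=
        sum_congr rfl fun t _ => by split_ifs <;> ring
    _ = q + (((q : ℂ) - 1) ^ 2 - 1) := by
        rw [sum_add_distrib, sum_const, card_trace_eq_zero hcard, sum_ite_eq', if_pos]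
        · simp
        · simp [zero_pow hq]
    _ = q * (q - 1) := by ring

lemma finsum_lowerUnitary_chiRes_mul_conj (hcard : Fintype.card e = q ^ 2) (θ₁ θ₂ : e → ℂ) :
    ∑ᶠ g ∈ lowerUnitary q e, chiRes q θ₁ g * conj (chiRes q θ₂ g) =
      q * (q - 1) * ∑ a ∈ {a : e | a * a ^ q = 1}, θ₁ a * conj (θ₂ a) := by
  have hq : q ≠ 0 := (one_lt_of_card_eq_sq hcard).ne_bot
  have hinner : ∀ a : e, a ≠ 0 →
      ∑ t ∈ ({t | t + t ^ q = 0} : Finset e),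
          chiRes q θ₁ (lowerUnitaryOf q a t) * conj (chiRes q θ₂ (lowerUnitaryOf q a t)) =
        if a * a ^ q = 1 then q * (q - 1) * (θ₁ a * conj (θ₂ a)) else 0 := by
    intro a ha
    simp only [chiRes_mul_conj_chiRes, lowerUnitaryOf, of_apply, cons_val', cons_val_zero,
      cons_val_one, empty_val', cons_val_fin_one, mul_eq_zero, ha, or_false]
    split_ifs
    · rw [← sum_mul, sum_trace_eq_zero_ite hcard]
    · exact sum_const_zero
  have hcircle : ({a | a ≠ 0 ∧ a * a ^ q = 1} : Finset e) = ({a | a * a ^ q = 1} : Finset e) := by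
    refine filter_congr fun a _ => and_iff_right_of_imp ?_
    rintro h rfl
    simp [zero_pow hq] at h
  rw [lowerUnitary_eq_image hcard, finsum_mem_image (injOn_lowerUnitaryOf.mono fun p hp => by simp_all),
    finsum_mem_coe_finset, sum_product, sum_congr rfl fun a ha => hinner a (mem_filter.1 ha).2,
    ← sum_filter, filter_filter, hcircle, mul_sum]

lemma inner_product_chiRes (hcard : Fintype.card e = q ^ 2) (θ₁ θ₂ : e → ℂ) :
    1 / (Nat.card (lowerUnitary q e) : ℂ) *
        ∑ᶠ g ∈ lowerUnitary q e, chiRes q θ₁ g * conj (chiRes q θ₂ g) =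
      (∑ a ∈ {a : e | a * a ^ q = 1}, θ₁ a * conj (θ₂ a)) / (q + 1) := by
  have hq := one_lt_of_card_eq_sq hcard
  have hq₀ : (q : ℂ) ≠ 0 := by exact_mod_cast (by omega : q ≠ 0)
  have hq₁ : (q : ℂ) - 1 ≠ 0 := sub_ne_zero.mpr (by exact_mod_cast hq.ne')
  have hq₂ : (q : ℂ) + 1 ≠ 0 := by exact_mod_cast q.succ_ne_zero
  rw [card_lowerUnitary hcard, finsum_lowerUnitary_chiRes_mul_conj hcard,
    Nat.cast_mul, Nat.cast_sub (Nat.one_le_pow _ _ (by omega)), Nat.cast_pow, Nat.cast_one,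
    show (q : ℂ) ^ 2 - 1 = (q + 1) * (q - 1) by ring]
  field_simp

end LowerUnitary

theorem statement11_general (q : ℕ)
    (e : Type*) [Field e] [Fintype e] (hcard : Fintype.card e = q ^ 2)
    (θ₁ θ₂ : e → ℂ)
    (hθ₁_one : θ₁ 1 = 1)
    (hθ₁_mul : ∀ x y : e, x * x ^ q = 1 → y * y ^ q = 1 → θ₁ (x * y) = θ₁ x * θ₁ y)
    (hθ₂_one : θ₂ 1 = 1)
    (hθ₂_mul : ∀ x y : e, x * x ^ q = 1 → y * y ^ q = 1 → θ₂ (x * y) = θ₂ x * θ₂ y) :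
    -- `H` is the lower-triangular subgroup of `U(1,1)(𝔽_q)`
    let H : Set (Matrix (Fin 2) (Fin 2) e) :=
      {g | (Matrix.of fun i j => (g i j) ^ q)ᵀ * !![0, 1; 1, 0] * g = !![0, 1; 1, 0] ∧
        g 0 1 = 0}
    -- if `θ₁ = θ₂` on `𝔢¹`, the normalized sum is `1` ...
    ((∀ x : e, x * x ^ q = 1 → θ₁ x = θ₂ x) →
      (1 / (Nat.card H : ℂ)) *
        ∑ᶠ g ∈ H, chiRes q θ₁ g * (starRingEnd ℂ) (chiRes q θ₂ g) = 1) ∧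
    -- ... and if `θ₁ ≠ θ₂` on `𝔢¹`, it is `0`
    ((∃ x : e, x * x ^ q = 1 ∧ θ₁ x ≠ θ₂ x) →
      (1 / (Nat.card H : ℂ)) *
        ∑ᶠ g ∈ H, chiRes q θ₁ g * (starRingEnd ℂ) (chiRes q θ₂ g) = 0) := by
  classical
  intro H
  have hθ₁ : IsNormOneCharacter q θ₁ := ⟨hθ₁_one, hθ₁_mul⟩
  have hθ₂ : IsNormOneCharacter q θ₂ := ⟨hθ₂_one, hθ₂_mul⟩
  rw [show H = lowerUnitary q e from rfl, inner_product_chiRes hcard]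
  refine ⟨fun heq => ?_, fun ⟨b, hb, hne⟩ => ?_⟩
  · rw [hθ₂.sum_mul_conj_of_eqOn heq, card_norm_eq_one hcard, Nat.cast_succ]
    exact div_self (by exact_mod_cast q.succ_ne_zero)
  · rw [hθ₁.sum_mul_conj_eq_zero hθ₂ hb hne, zero_div]

/-- Orthogonality: for characters `θ₁, θ₂ : 𝔢¹ → ℂ^×`,
`(1/|H|)·Σ_{g ∈ H} χ_{θ₁}(g)·conj(χ_{θ₂}(g))` equals `1` if `θ₁ = θ₂` and `0` otherwise.
Here `q` is an odd prime power, `𝔢 = 𝔽_{q²}` with involution `x̄ = x^q`,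
`H = {g ∈ U(1,1)(𝔽_q) : g lower triangular}`, and the characters `θᵢ` are modelled as
functions `𝔢 → ℂ` that are multiplicative on `𝔢¹` and send `1` to `1`. -/
theorem statement11 (q : ℕ) (hq_odd : Odd q)
    (p n : ℕ) (hp : p.Prime) (hn : 0 < n) (hqpn : q = p ^ n)
    (e : Type*) [Field e] [Fintype e] (hcard : Fintype.card e = q ^ 2)
    (θ₁ θ₂ : e → ℂ)
    (hθ₁_one : θ₁ 1 = 1)
    (hθ₁_mul : ∀ x y : e, x * x ^ q = 1 → y * y ^ q = 1 → θ₁ (x * y) = θ₁ x * θ₁ y)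
    (hθ₂_one : θ₂ 1 = 1)
    (hθ₂_mul : ∀ x y : e, x * x ^ q = 1 → y * y ^ q = 1 → θ₂ (x * y) = θ₂ x * θ₂ y) :
    -- `H` is the lower-triangular subgroup of `U(1,1)(𝔽_q)`
    let H : Set (Matrix (Fin 2) (Fin 2) e) :=
      {g | (Matrix.of fun i j => (g i j) ^ q)ᵀ * !![0, 1; 1, 0] * g = !![0, 1; 1, 0] ∧
        g 0 1 = 0}
    -- if `θ₁ = θ₂` on `𝔢¹`, the normalized sum is `1` ...
    ((∀ x : e, x * x ^ q = 1 → θ₁ x = θ₂ x) →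
      (1 / (Nat.card H : ℂ)) *
        ∑ᶠ g ∈ H, chiRes q θ₁ g * (starRingEnd ℂ) (chiRes q θ₂ g) = 1) ∧
    -- ... and if `θ₁ ≠ θ₂` on `𝔢¹`, it is `0`
    ((∃ x : e, x * x ^ q = 1 ∧ θ₁ x ≠ θ₂ x) →
      (1 / (Nat.card H : ℂ)) *
        ∑ᶠ g ∈ H, chiRes q θ₁ g * (starRingEnd ℂ) (chiRes q θ₂ g) = 0) :=
  statement11_general q e hcard θ₁ θ₂ hθ₁_one hθ₁_mul hθ₂_one hθ₂_mul
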